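/- Let X be a lazy simple random walk on Z^d started at 0, let (D_s)_{s≤t} be finite subsets of Z^d symmetric about the origin (D_s = −D_s), and let σ be a reflection of Z^d. Then E[ vol( ∪_{s=0}^t (X_s + D_s) ) ] ≥ E[ vol( ∪_{s=0}^t (X_s + D_s^σ) ) ], where D^σ is the two-point rearrangement of D with respect to σ. -/

import Mathlib

open scoped ENNReal Classical

/-- Graph (L¹) distance on `ℤ^d`. -/
def zdist {d : ℕ} (x y : Fin d → ℤ) : ℕ :=
  ∑ i, (x i - y i).natAbs

/-- Transition kernel of the lazy simple random walk on `ℤ^d`. -/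
noncomputable def lazyPZ (d : ℕ) (x y : Fin d → ℤ) : ℝ≥0∞ :=
  (if y = x then 1 / 2 else 0) +
    (∑ i : Fin d,
        ((if y = Function.update x i (x i + 1) then (1 : ℝ≥0∞) else 0) +
          (if y = Function.update x i (x i - 1) then (1 : ℝ≥0∞) else 0))) / (4 * d)

/-- Expected volume `E[vol(∪_{s=0}^t (X_s + D_s))]` for the walk with kernel `P`
started at `0`, computed as a sum over paths `ω = (X_0, X_1, …, X_t)`. -/
noncomputable def esaus (d t : ℕ) (P : (Fin d → ℤ) → (Fin d → ℤ) → ℝ≥0∞)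
    (D : ℕ → Finset (Fin d → ℤ)) : ℝ≥0∞ :=
  ∑' ω : Fin (t + 1) → Fin d → ℤ,
    (if ω 0 = 0 then (1 : ℝ≥0∞) else 0) *
      (∏ i : Fin t, P (ω i.castSucc) (ω i.succ)) *
        ((Finset.univ.biUnion fun s : Fin (t + 1) =>
            (D s).image fun z => ω s + z).card : ℝ≥0∞)

/-- Two-point rearrangement `D^σ` of a finite set `D` with respect to a reflection `σ`
with half-spaces `Hp` and `Hm`. -/
noncomputable def rearr {V : Type*} [DecidableEq V] (σ : V → V) (Hp Hm : Set V)
    (D : Finset V) : Finset V :=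
  ((D ∪ D.image σ).filter fun x => x ∈ Hp) ∪
    ((D ∩ D.image σ).filter fun x => x ∈ Hm) ∪
      (D.filter fun x => x ∉ Hp ∧ x ∉ Hm)

/-!
Writing `vol (⋃ₛ (Xₛ + Dₛ)) = ∑_z 𝟙[∃ s, z - Xₛ ∈ Dₛ]` and reversing the walk, whose increments
are symmetric, turns the expected volume into `∑_z P_z(∃ s ≤ t, Yₛ ∈ Dₛ)`: a sum over starting
points `z` of hitting probabilities of the moving target `Dₛ`.

Let `u` and `v` be these hitting probabilities for `D` and for `D^σ`. On every orbit `{z, σ z}`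
with `z ∈ H⁺` they satisfy the two-point majorization `v (σ z) ≤ min (u z) (u (σ z))` and
`v z + v (σ z) ≤ u z + u (σ z)`, and `v ≤ u` on `H⁰`. This holds at time `0` by the definition
of `D^σ`. It survives one step of the walk because the kernel is `σ`-invariant, lazy
(`P z z ≥ P z (σ z)`), and from `z ∈ H⁺` it enters `H⁻` only at `σ z`. It also survives stopping
at the current target, again by the definition of `D^σ`. Summing over orbits gives the claim.
-/

theorem Function.Involutive.tsum_comp {α β : Type*} [AddCommMonoid β] [TopologicalSpace β]
    {σ : α → α} (hσ : Function.Involutive σ) (f : α → β) : ∑' x, f (σ x) = ∑' x, f x :=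
  (hσ.toPerm σ).tsum_eq f

theorem Function.Involutive.mem_finset_image_iff {α : Type*} [DecidableEq α] {σ : α → α}
    (hσ : Function.Involutive σ) {D : Finset α} {x : α} : x ∈ D.image σ ↔ σ x ∈ D :=
  ⟨fun h => by obtain ⟨y, hy, rfl⟩ := Finset.mem_image.mp h; rwa [hσ],
    fun h => Finset.mem_image.mpr ⟨σ x, h, hσ x⟩⟩

theorem Finset.card_eq_tsum_ite {α : Type*} (S : Finset α) :
    (S.card : ℝ≥0∞) = ∑' x, if x ∈ S then 1 else 0 := by
  rw [tsum_eq_sum (s := S) fun x hx => if_neg hx]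
  simp

theorem ENNReal.tsum_mul_le_tsum_mul_of_pair {α : Type*} {p h k : α → ℝ≥0∞} {a b : α}
    (hab : a ≠ b) (hp : p b ≤ p a) (ha : h a ≤ k a) (hsum : h a + h b ≤ k a + k b)
    (hrest : ∀ y, y ≠ a → y ≠ b → p y * h y ≤ p y * k y) :
    ∑' y, p y * h y ≤ ∑' y, p y * k y := by
  obtain ⟨γ, hγ⟩ := le_iff_exists_add.mp hp
  have hpair : p a * h a + p b * h b ≤ p a * k a + p b * k b :=
    calc p a * h a + p b * h b = p b * (h a + h b) + γ * h a := by rw [hγ]; ring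
      _ ≤ p b * (k a + k b) + γ * k a := by gcongr
      _ = p a * k a + p b * k b := by rw [hγ]; ring
  rw [← ENNReal.sum_add_tsum_compl {a, b}, ← ENNReal.sum_add_tsum_compl {a, b},
    Finset.sum_pair hab, Finset.sum_pair hab]
  refine add_le_add hpair (ENNReal.tsum_le_tsum fun ⟨y, hy⟩ => hrest y ?_ ?_) <;>
    simp_all

structure IsReflection {V : Type*} (σ : V → V) (Hp Hm : Set V) : Prop where
  involutive : Function.Involutive σ
  disjoint : Disjoint Hp Hm
  image_eq : σ '' Hp = Hm
  apply_eq_self : ∀ x, x ∉ Hp → x ∉ Hm → σ x = x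

namespace IsReflection

variable {V : Type*} {σ : V → V} {Hp Hm : Set V} {x : V}

theorem apply_mem_neg (hσ : IsReflection σ Hp Hm) (hx : x ∈ Hp) : σ x ∈ Hm :=
  hσ.image_eq ▸ Set.mem_image_of_mem σ hx

theorem apply_mem_pos (hσ : IsReflection σ Hp Hm) (hx : x ∈ Hm) : σ x ∈ Hp := by
  obtain ⟨y, hy, rfl⟩ := hσ.image_eq ▸ hx
  rwa [hσ.involutive]

theorem apply_mem_pos_iff (hσ : IsReflection σ Hp Hm) : σ x ∈ Hp ↔ x ∈ Hm :=
  ⟨fun h => hσ.involutive x ▸ hσ.apply_mem_neg h, hσ.apply_mem_pos⟩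

theorem notMem_neg (hσ : IsReflection σ Hp Hm) (hx : x ∈ Hp) : x ∉ Hm :=
  Set.disjoint_left.mp hσ.disjoint hx

theorem notMem_pos (hσ : IsReflection σ Hp Hm) (hx : x ∈ Hm) : x ∉ Hp := fun h =>
  hσ.notMem_neg h hx

theorem apply_ne_self (hσ : IsReflection σ Hp Hm) (hx : x ∈ Hp) : σ x ≠ x := fun h =>
  hσ.notMem_neg hx (h ▸ hσ.apply_mem_neg hx)

variable [DecidableEq V] {D : Finset V}

theorem mem_rearr_of_mem_pos (hσ : IsReflection σ Hp Hm) (hx : x ∈ Hp) :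
    x ∈ rearr σ Hp Hm D ↔ x ∈ D ∨ σ x ∈ D := by
  simp [rearr, hσ.involutive.mem_finset_image_iff, hx, hσ.notMem_neg hx]

theorem mem_rearr_of_mem_neg (hσ : IsReflection σ Hp Hm) (hx : x ∈ Hm) :
    x ∈ rearr σ Hp Hm D ↔ x ∈ D ∧ σ x ∈ D := by
  simp [rearr, hσ.involutive.mem_finset_image_iff, hx, hσ.notMem_pos hx]

end IsReflection

theorem mem_rearr_of_notMem {V : Type*} [DecidableEq V] {σ : V → V} {Hp Hm : Set V}
    {D : Finset V} {x : V} (hp : x ∉ Hp) (hm : x ∉ Hm) : x ∈ rearr σ Hp Hm D ↔ x ∈ D := by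
  simp [rearr, hp, hm]

noncomputable section Kernel

variable {V : Type*} {σ : V → V} {Hp Hm : Set V}

structure ReflectionCompatible (σ : V → V) (Hp Hm : Set V) (P : V → V → ℝ≥0∞) : Prop where
  invariant : ∀ x y, P (σ x) (σ y) = P x y
  reflect_le_self : ∀ x ∈ Hp, P x (σ x) ≤ P x x
  eq_zero_of_mem_neg : ∀ x ∈ Hp, ∀ y ∈ Hm, y ≠ σ x → P x y = 0

def kernelApply (P : V → V → ℝ≥0∞) (f : V → ℝ≥0∞) (x : V) : ℝ≥0∞ :=
  ∑' y, P x y * f y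

theorem kernelApply_mono (P : V → V → ℝ≥0∞) {f g : V → ℝ≥0∞} (h : ∀ x, f x ≤ g x) (x : V) :
    kernelApply P f x ≤ kernelApply P g x :=
  ENNReal.tsum_le_tsum fun y => mul_le_mul_right (h y) _

theorem kernelApply_apply_reflect (hσ : Function.Involutive σ) {P : V → V → ℝ≥0∞}
    (hP : ∀ x y, P (σ x) (σ y) = P x y) (f : V → ℝ≥0∞) (x : V) :
    kernelApply P f (σ x) = kernelApply P (f ∘ σ) x := by
  rw [kernelApply, ← hσ.tsum_comp]
  simp [kernelApply, hP]

theorem kernelApply_reflect_le (hσ : IsReflection σ Hp Hm) {P : V → V → ℝ≥0∞}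
    (hP : ReflectionCompatible σ Hp Hm P) {g k : V → ℝ≥0∞} {z : V} (hz : z ∈ Hp)
    (hk : ∀ y ∉ Hm, g (σ y) ≤ k y) (hpair : g (σ z) + g z ≤ k z + k (σ z)) :
    kernelApply P g (σ z) ≤ kernelApply P k z := by
  rw [kernelApply_apply_reflect hσ.involutive hP.invariant]
  refine ENNReal.tsum_mul_le_tsum_mul_of_pair (hσ.apply_ne_self hz).symm
    (hP.reflect_le_self z hz) (hk z (hσ.notMem_neg hz)) (by rwa [Function.comp_apply,
      Function.comp_apply, hσ.involutive]) fun y hyz hyσz => ?_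
  by_cases hy : y ∈ Hm
  · simp [hP.eq_zero_of_mem_neg z hz y hy hyσz]
  · exact mul_le_mul_right (hk y hy) _

def totalMass (P : V → V → ℝ≥0∞) : ℕ → V → ℝ≥0∞
  | 0, _ => 1
  | n + 1, x => kernelApply P (totalMass P n) x

/-- The weight of the paths `x = x₀, x₁, …, xₙ` with `xₛ ∈ A s` for some `s`. Once the target is
met the rest of the path is free, which contributes `totalMass` rather than `1`: the kernel need
not be stochastic (`lazyPZ 0` has total mass `1 / 2`). -/
def hitMass [DecidableEq V] (P : V → V → ℝ≥0∞) : ℕ → (ℕ → Finset V) → V → ℝ≥0∞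
  | 0, A, x => if x ∈ A 0 then 1 else 0
  | n + 1, A, x => if x ∈ A 0 then totalMass P (n + 1) x
      else kernelApply P (hitMass P n fun s => A (s + 1)) x

theorem totalMass_apply_reflect (hσ : Function.Involutive σ) {P : V → V → ℝ≥0∞}
    (hP : ∀ x y, P (σ x) (σ y) = P x y) (n : ℕ) (x : V) :
    totalMass P n (σ x) = totalMass P n x := by
  induction n generalizing x with
  | zero => rfl
  | succ n ih =>
    simp only [totalMass, kernelApply_apply_reflect hσ hP, Function.comp_def, ih]

theorem hitMass_le_totalMass [DecidableEq V] (P : V → V → ℝ≥0∞) (n : ℕ) (A : ℕ → Finset V)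
    (x : V) :
    hitMass P n A x ≤ totalMass P n x := by
  induction n generalizing A x with
  | zero => unfold hitMass; split <;> simp [totalMass]
  | succ n ih =>
    unfold hitMass
    split
    · exact le_rfl
    · exact kernelApply_mono P (ih _) x

end Kernel

/-- `g` is majorized by `f` on every orbit `{x, σ x}`; `x ∉ Hp` covers both `H⁻` and `H⁰`. -/
structure PairDominated {V : Type*} (σ : V → V) (Hp : Set V) (g f : V → ℝ≥0∞) : Prop where
  le_self : ∀ x ∉ Hp, g x ≤ f x
  le_reflect : ∀ x ∉ Hp, g x ≤ f (σ x)
  add_le : ∀ x ∈ Hp, g x + g (σ x) ≤ f x + f (σ x)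

namespace PairDominated

variable {V : Type*} {σ : V → V} {Hp Hm : Set V} {g f : V → ℝ≥0∞}

theorem add_le_add_reflect (hσ : IsReflection σ Hp Hm) (h : PairDominated σ Hp g f) (x : V) :
    g x + g (σ x) ≤ f x + f (σ x) := by
  by_cases hp : x ∈ Hp
  · exact h.add_le x hp
  by_cases hm : x ∈ Hm
  · have := h.add_le (σ x) (hσ.apply_mem_pos hm)
    rwa [hσ.involutive, add_comm (g _), add_comm (f _)] at this
  · rw [hσ.apply_eq_self x hp hm]
    exact add_le_add (h.le_self x hp) (h.le_self x hp)

theorem tsum_le (hσ : IsReflection σ Hp Hm) (h : PairDominated σ Hp g f) :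
    ∑' x, g x ≤ ∑' x, f x := by
  have hdouble : ∀ u : V → ℝ≥0∞, 2 * ∑' x, u x = ∑' x, (u x + u (σ x)) := fun u => by
    rw [ENNReal.tsum_add, hσ.involutive.tsum_comp, two_mul]
  rw [← ENNReal.mul_le_mul_iff_right two_ne_zero ENNReal.ofNat_ne_top, hdouble, hdouble]
  exact ENNReal.tsum_le_tsum (h.add_le_add_reflect hσ)

theorem map_kernel (hσ : IsReflection σ Hp Hm) {P : V → V → ℝ≥0∞}
    (hP : ReflectionCompatible σ Hp Hm P) (h : PairDominated σ Hp g f) :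
    PairDominated σ Hp (kernelApply P g) (kernelApply P f) := by
  have hpair : ∀ x, kernelApply P g x + kernelApply P g (σ x) ≤
      kernelApply P f x + kernelApply P f (σ x) := fun x => by
    rw [kernelApply_apply_reflect hσ.involutive hP.invariant g,
      kernelApply_apply_reflect hσ.involutive hP.invariant f]
    simp only [kernelApply, Function.comp_apply, ← ENNReal.tsum_add, ← mul_add]
    exact ENNReal.tsum_le_tsum fun y => mul_le_mul_right (h.add_le_add_reflect hσ y) _
  have hneg : ∀ x ∈ Hm, kernelApply P g x ≤ kernelApply P f x ∧
      kernelApply P g x ≤ kernelApply P f (σ x) := fun x hx => by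
    obtain ⟨z, hz, rfl⟩ := hσ.image_eq ▸ hx
    have hσz : ∀ y ∉ Hm, σ y ∉ Hp := fun y hy => mt hσ.apply_mem_pos_iff.mp hy
    have hpz := h.add_le z hz
    constructor
    · rw [kernelApply_apply_reflect hσ.involutive hP.invariant f]
      refine kernelApply_reflect_le hσ hP hz (fun y hy => h.le_self _ (hσz y hy)) ?_
      simpa [hσ.involutive z, add_comm] using hpz
    · rw [hσ.involutive z]
      refine kernelApply_reflect_le hσ hP hz (fun y hy => ?_) ?_
      · simpa [hσ.involutive y] using h.le_reflect _ (hσz y hy)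
      · rwa [add_comm (g _)]
  have hfix : ∀ x ∉ Hp, x ∉ Hm → kernelApply P g x ≤ kernelApply P f x := fun x hp hm => by
    have hx := hpair x
    rw [hσ.apply_eq_self x hp hm] at hx
    exact le_of_not_gt fun hlt => (ENNReal.add_lt_add hlt hlt).not_ge hx
  refine ⟨fun x hp => ?_, fun x hp => ?_, fun x _ => hpair x⟩ <;> by_cases hm : x ∈ Hm
  · exact (hneg x hm).1
  · exact hfix x hp hm
  · exact (hneg x hm).2
  · rw [hσ.apply_eq_self x hp hm]
    exact hfix x hp hm

theorem ite_rearr [DecidableEq V] (hσ : IsReflection σ Hp Hm) (h : PairDominated σ Hp g f)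
    {M : V → ℝ≥0∞} (hM : ∀ x, M (σ x) = M x) (hgM : ∀ x, g x ≤ M x) (B : Finset V) :
    PairDominated σ Hp (fun x => if x ∈ rearr σ Hp Hm B then M x else g x)
      (fun x => if x ∈ B then M x else f x) := by
  have hfix : ∀ x ∉ Hp, x ∉ Hm →
      (if x ∈ rearr σ Hp Hm B then M x else g x) ≤ if x ∈ B then M x else f x :=
    fun x hp hm => by
      rw [if_congr (mem_rearr_of_notMem hp hm) rfl rfl]
      split_ifs
      exacts [le_rfl, h.le_self x hp]
  refine ⟨fun x hp => ?_, fun x hp => ?_, fun x hp => ?_⟩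
  · by_cases hm : x ∈ Hm
    · rw [if_congr (hσ.mem_rearr_of_mem_neg hm) rfl rfl]
      split_ifs with hx hx'
      exacts [le_rfl, absurd hx.1 hx', hgM x, h.le_self x hp]
    · exact hfix x hp hm
  · by_cases hm : x ∈ Hm
    · rw [if_congr (hσ.mem_rearr_of_mem_neg hm) rfl rfl, hM]
      split_ifs with hx hx'
      exacts [le_rfl, absurd hx.2 hx', hgM x, h.le_reflect x hp]
    · rw [hσ.apply_eq_self x hp hm]
      exact hfix x hp hm
  · have hσx := hσ.notMem_pos (hσ.apply_mem_neg hp)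
    rw [if_congr (hσ.mem_rearr_of_mem_pos hp) rfl rfl,
      if_congr (hσ.mem_rearr_of_mem_neg (hσ.apply_mem_neg hp)) rfl rfl, hσ.involutive x, hM]
    by_cases hx : x ∈ B <;> by_cases hy : σ x ∈ B <;> simp only [hx, hy, if_true, if_false,
      or_true, or_false, and_true, and_false]
    · exact le_rfl
    · gcongr
      exact h.le_self _ hσx
    · rw [add_comm (M x)]
      gcongr
      simpa [hσ.involutive x] using h.le_reflect _ hσx
    · exact h.add_le x hp

end PairDominated

section Hitting

variable {V : Type*} [DecidableEq V] {σ : V → V} {Hp Hm : Set V} {P : V → V → ℝ≥0∞}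

theorem pairDominated_hitMass (hσ : IsReflection σ Hp Hm) (hP : ReflectionCompatible σ Hp Hm P)
    (n : ℕ) (A : ℕ → Finset V) :
    PairDominated σ Hp (hitMass P n fun s => rearr σ Hp Hm (A s)) (hitMass P n A) := by
  induction n generalizing A with
  | zero =>
    have h0 : PairDominated σ Hp 0 0 := ⟨fun _ _ => le_rfl, fun _ _ => le_rfl, fun _ _ => le_rfl⟩
    exact h0.ite_rearr hσ (M := fun _ => 1) (fun _ => rfl) (fun _ => zero_le) (A 0)
  | succ n ih =>
    exact ((ih fun s => A (s + 1)).map_kernel hσ hP).ite_rearr hσ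
      (totalMass_apply_reflect hσ.involutive hP.invariant (n + 1))
      (kernelApply_mono P (hitMass_le_totalMass P n _)) (A 0)

theorem tsum_hitMass_rearr_le (hσ : IsReflection σ Hp Hm) (hP : ReflectionCompatible σ Hp Hm P)
    (n : ℕ) (A : ℕ → Finset V) :
    ∑' x, hitMass P n (fun s => rearr σ Hp Hm (A s)) x ≤ ∑' x, hitMass P n A x :=
  (pairDominated_hitMass hσ hP n A).tsum_le hσ

end Hitting

noncomputable section Paths

variable {V : Type*} [DecidableEq V] {P : V → V → ℝ≥0∞}

def pathWeight (P : V → V → ℝ≥0∞) (x : V) {n : ℕ} (ω : Fin (n + 1) → V) : ℝ≥0∞ :=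
  (if ω 0 = x then 1 else 0) * ∏ i : Fin n, P (ω i.castSucc) (ω i.succ)

theorem tsum_pathWeight_mul_zero (F : (Fin 1 → V) → ℝ≥0∞) (x : V) :
    ∑' ω, pathWeight P x ω * F ω = F fun _ => x := by
  rw [← (Equiv.funUnique (Fin 1) V).symm.tsum_eq, tsum_eq_single x fun y hy => by
    simp [pathWeight, hy]]
  simp [pathWeight]
  rfl

theorem pathWeight_cons {n : ℕ} (x a : V) (ν : Fin (n + 1) → V) :
    pathWeight P x (Fin.cons a ν : Fin (n + 2) → V) =
      (if a = x then 1 else 0) * (P a (ν 0) * ∏ i : Fin n, P (ν i.castSucc) (ν i.succ)) := by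
  simp [pathWeight, Fin.prod_univ_succ]

theorem tsum_mul_pathWeight {n : ℕ} (x : V) (ν : Fin (n + 1) → V) :
    ∑' y, P x y * pathWeight P y ν = P x (ν 0) * ∏ i : Fin n, P (ν i.castSucc) (ν i.succ) := by
  rw [tsum_eq_single (ν 0) fun y hy => by simp [pathWeight, Ne.symm hy]]
  simp [pathWeight]

theorem tsum_pathWeight_mul_succ {n : ℕ} (F : (Fin (n + 2) → V) → ℝ≥0∞) (x : V) :
    ∑' ω, pathWeight P x ω * F ω =
      kernelApply P (fun y => ∑' ν, pathWeight P y ν * F (Fin.cons x ν)) x := by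
  calc ∑' ω, pathWeight P x ω * F ω
      = ∑' p : V × (Fin (n + 1) → V), pathWeight P x (Fin.cons p.1 p.2) * F (Fin.cons p.1 p.2) :=
        ((Fin.consEquiv fun _ => V).tsum_eq _).symm
    _ = ∑' ν, pathWeight P x (Fin.cons x ν) * F (Fin.cons x ν) := by
        rw [ENNReal.tsum_prod', tsum_eq_single x fun a ha => by simp [pathWeight_cons, ha]]
    _ = ∑' ν, ∑' y, P x y * pathWeight P y ν * F (Fin.cons x ν) := by
        simp [pathWeight_cons, ENNReal.tsum_mul_right, tsum_mul_pathWeight]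
    _ = _ := by
        rw [ENNReal.tsum_comm]
        simp [kernelApply, ← ENNReal.tsum_mul_left, mul_assoc]

theorem tsum_pathWeight_eq_totalMass (n : ℕ) (x : V) :
    ∑' ω : Fin (n + 1) → V, pathWeight P x ω = totalMass P n x := by
  induction n generalizing x with
  | zero => simpa [totalMass] using tsum_pathWeight_mul_zero (P := P) (fun _ => 1) x
  | succ n ih =>
    simpa [ih, totalMass] using tsum_pathWeight_mul_succ (P := P) (n := n) (fun _ => 1) x

theorem tsum_pathWeight_mul_hitMass (n : ℕ) (A : ℕ → Finset V) (x : V) :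
    ∑' ω : Fin (n + 1) → V, pathWeight P x ω * (if ∃ s : Fin (n + 1), ω s ∈ A s then 1 else 0) =
      hitMass P n A x := by
  induction n generalizing A x with
  | zero =>
    rw [tsum_pathWeight_mul_zero]
    simp [hitMass]
  | succ n ih =>
    have hcons : ∀ ν : Fin (n + 1) → V,
        (∃ s : Fin (n + 2), (Fin.cons x ν : Fin (n + 2) → V) s ∈ A s) ↔
          x ∈ A 0 ∨ ∃ s : Fin (n + 1), ν s ∈ A (s + 1) := fun ν => by
      rw [Fin.exists_fin_succ]
      simp only [Fin.cons_zero, Fin.cons_succ, Fin.val_succ, Fin.val_zero]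
    simp only [tsum_pathWeight_mul_succ, hcons, hitMass]
    by_cases hx : x ∈ A 0
    · simp only [hx, true_or, if_true, mul_one, tsum_pathWeight_eq_totalMass]
      rfl
    · simp only [hx, false_or, if_false, ih fun s => A (s + 1)]

end Paths

section Lattice

variable {d : ℕ}

theorem zdist_self (x : Fin d → ℤ) : zdist x x = 0 := by
  simp [zdist]

theorem zdist_eq_zero_iff {x y : Fin d → ℤ} : zdist x y = 0 ↔ x = y := by
  simp only [zdist, Finset.sum_eq_zero_iff, Finset.mem_univ, true_implies, Int.natAbs_eq_zero,
    sub_eq_zero, funext_iff]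

theorem zdist_update_add (x : Fin d → ℤ) (i : Fin d) (e : ℤ) :
    zdist x (Function.update x i (x i + e)) = e.natAbs := by
  rw [zdist, Finset.sum_eq_single i (fun j _ hj => by simp [Function.update_of_ne hj]) (by simp)]
  simp

theorem zdist_sub_sub (z x y : Fin d → ℤ) : zdist (z - x) (z - y) = zdist x y := by
  refine Finset.sum_congr rfl fun i _ => ?_
  simp only [Pi.sub_apply, sub_sub_sub_cancel_left, ← Int.natAbs_neg (x i - y i), neg_sub]

theorem exists_eq_update_of_zdist_eq_one {x y : Fin d → ℤ} (h : zdist x y = 1) :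
    ∃ i, ∃ e : ℤ, e.natAbs = 1 ∧ y = Function.update x i (x i + e) := by
  obtain ⟨i, hi⟩ : ∃ i, x i ≠ y i := by
    by_contra! hxy
    rw [funext hxy, zdist_self] at h
    exact zero_ne_one h
  have hsplit := Finset.add_sum_erase Finset.univ (fun j => (x j - y j).natAbs)
    (Finset.mem_univ i)
  change _ = zdist x y at hsplit
  have hrest : ∀ j ≠ i, y j = x j := fun j hj => by
    have := Finset.sum_eq_zero_iff.mp (show ∑ j ∈ Finset.univ.erase i,
      (x j - y j).natAbs = 0 by omega) j (by simp [hj])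
    omega
  refine ⟨i, y i - x i, by omega, funext fun j => ?_⟩
  by_cases hj : j = i
  · simp [hj]
  · simp [hj, hrest j hj]

theorem sum_indicator_neighbors (x y : Fin d → ℤ) :
    (∑ i : Fin d,
        ((if y = Function.update x i (x i + 1) then (1 : ℝ≥0∞) else 0) +
          (if y = Function.update x i (x i - 1) then (1 : ℝ≥0∞) else 0))) =
      if zdist x y = 1 then 1 else 0 := by
  split_ifs with h
  · obtain ⟨i, e, he, rfl⟩ := exists_eq_update_of_zdist_eq_one h
    rw [Finset.sum_eq_single i]
    · rcases (by omega : e = 1 ∨ e = -1) with rfl | rfl <;>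
        simp [Function.update_eq_iff, ← sub_eq_add_neg] <;> intro <;> omega
    · intro j _ hj
      have hne : ∀ c, Function.update x i (x i + e) ≠ Function.update x j c := fun c hc => by
        have := congrFun hc i
        simp [Function.update_of_ne (Ne.symm hj)] at this
        omega
      simp [hne]
    · simp
  · refine Finset.sum_eq_zero fun i _ => ?_
    have hne : ∀ e : ℤ, e.natAbs = 1 → y ≠ Function.update x i (x i + e) := fun e he hy =>
      h (by rw [hy, zdist_update_add, he])
    simp [hne 1 rfl, sub_eq_add_neg, hne (-1) rfl]

theorem lazyPZ_eq (x y : Fin d → ℤ) :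
    lazyPZ d x y = (if zdist x y = 0 then 1 / 2 else 0) +
      (if zdist x y = 1 then 1 else 0) / (4 * d) := by
  simp only [lazyPZ, sum_indicator_neighbors, zdist_eq_zero_iff, eq_comm]

theorem lazyPZ_congr {x y x' y' : Fin d → ℤ} (h : zdist x y = zdist x' y') :
    lazyPZ d x y = lazyPZ d x' y' := by
  rw [lazyPZ_eq, lazyPZ_eq, h]

theorem lazyPZ_eq_zero {x y : Fin d → ℤ} (h : 2 ≤ zdist x y) : lazyPZ d x y = 0 := by
  rw [lazyPZ_eq, if_neg (by omega), if_neg (by omega)]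
  simp

theorem lazyPZ_le_self (x y : Fin d → ℤ) : lazyPZ d x y ≤ lazyPZ d x x := by
  rcases Nat.lt_or_ge (zdist x y) 2 with hlt | hge
  · rw [lazyPZ_eq x x, zdist_self, lazyPZ_eq]
    interval_cases h : zdist x y
    · simp
    · have hd : 2 ≤ 4 * d := by
        rcases d with _ | d
        · simp [zdist] at h
        · omega
      simpa using ENNReal.div_le_div_left (by exact_mod_cast hd : (2 : ℝ≥0∞) ≤ 4 * d) 1
  · rw [lazyPZ_eq_zero hge]
    exact zero_le

theorem lazyPZ_reflectionCompatible {σ : (Fin d → ℤ) → (Fin d → ℤ)}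
    {Hp Hm : Set (Fin d → ℤ)} (hσ : IsReflection σ Hp Hm)
    (hiso : ∀ x y, zdist (σ x) (σ y) = zdist x y)
    (hhalf : ∀ x ∈ Hp, ∀ y ∈ Hp, zdist x y < zdist x (σ y)) :
    ReflectionCompatible σ Hp Hm (lazyPZ d) where
  invariant x y := lazyPZ_congr (hiso x y)
  reflect_le_self x _ := lazyPZ_le_self x (σ x)
  eq_zero_of_mem_neg x hx y hy hne := lazyPZ_eq_zero <| by
    have hlt := hhalf x hx (σ y) (hσ.apply_mem_pos hy)
    have hpos : zdist x (σ y) ≠ 0 := fun h => hne (by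
      rw [zdist_eq_zero_iff.mp h, hσ.involutive])
    rw [hσ.involutive y] at hlt
    omega

end Lattice

theorem esaus_lazyPZ_eq_tsum_hitMass (d t : ℕ) (D : ℕ → Finset (Fin d → ℤ)) :
    esaus d t (lazyPZ d) D = ∑' z, hitMass (lazyPZ d) t D z := by
  have hcard : ∀ ω : Fin (t + 1) → Fin d → ℤ,
      ((Finset.univ.biUnion fun s : Fin (t + 1) => (D s).image fun p => ω s + p).card : ℝ≥0∞) =
        ∑' z, if ∃ s : Fin (t + 1), z - ω s ∈ D s then 1 else 0 := fun ω => by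
    have hmem : ∀ z, (∃ s : Fin (t + 1), ∃ p ∈ D s, ω s + p = z) ↔
        ∃ s : Fin (t + 1), z - ω s ∈ D s :=
      fun z => exists_congr fun s => ⟨fun ⟨p, hp, he⟩ => by rwa [← he, add_sub_cancel_left],
        fun h => ⟨_, h, add_sub_cancel _ _⟩⟩
    simp only [Finset.card_eq_tsum_ite, Finset.mem_biUnion, Finset.mem_univ, true_and,
      Finset.mem_image, hmem]
  calc esaus d t (lazyPZ d) D
      = ∑' ω, ∑' z, pathWeight (lazyPZ d) 0 ω *
          (if ∃ s : Fin (t + 1), z - ω s ∈ D s then 1 else 0) := by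
        simp only [esaus, hcard, pathWeight, ENNReal.tsum_mul_left]
    _ = ∑' z, ∑' ν, pathWeight (lazyPZ d) z ν *
          (if ∃ s : Fin (t + 1), ν s ∈ D s then 1 else 0) := by
        rw [ENNReal.tsum_comm]
        refine tsum_congr fun z => ?_
        rw [← (Equiv.subLeft fun _ => z).tsum_eq]
        simp [pathWeight, sub_eq_zero, eq_comm, lazyPZ_congr (zdist_sub_sub z _ _)]
    _ = ∑' z, hitMass (lazyPZ d) t D z := by
        simp only [tsum_pathWeight_mul_hitMass]

theorem stmt11_general (d t : ℕ)
    (σ : (Fin d → ℤ) → (Fin d → ℤ))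
    (Hp Hm : Set (Fin d → ℤ))
    (hinv : ∀ x, σ (σ x) = x)
    (hiso : ∀ x y, zdist (σ x) (σ y) = zdist x y)
    (hdisj : Disjoint Hp Hm)
    (hmap : σ '' Hp = Hm)
    (hfix : ∀ x, x ∉ Hp → x ∉ Hm → σ x = x)
    (hhalf : ∀ x ∈ Hp, ∀ y ∈ Hp, zdist x y < zdist x (σ y))
    (D : ℕ → Finset (Fin d → ℤ)) :
    esaus d t (lazyPZ d) (fun s => rearr σ Hp Hm (D s)) ≤
      esaus d t (lazyPZ d) D := by
  have hσ : IsReflection σ Hp Hm := ⟨hinv, hdisj, hmap, hfix⟩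
  rw [esaus_lazyPZ_eq_tsum_hitMass, esaus_lazyPZ_eq_tsum_hitMass]
  exact tsum_hitMass_rearr_le hσ (lazyPZ_reflectionCompatible hσ hiso hhalf) t D

theorem stmt11 (d t : ℕ)
    (σ : (Fin d → ℤ) → (Fin d → ℤ))
    (Hp Hm : Set (Fin d → ℤ))
    (hinv : ∀ x, σ (σ x) = x)
    (hiso : ∀ x y, zdist (σ x) (σ y) = zdist x y)
    (hdisj : Disjoint Hp Hm)
    (hmap : σ '' Hp = Hm)
    (hfix : ∀ x, x ∉ Hp → x ∉ Hm → σ x = x)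
    (hhalf : ∀ x ∈ Hp, ∀ y ∈ Hp, zdist x y < zdist x (σ y))
    (D : ℕ → Finset (Fin d → ℤ))
    (hsym : ∀ (s : ℕ) (z : Fin d → ℤ), z ∈ D s ↔ -z ∈ D s) :
    esaus d t (lazyPZ d) (fun s => rearr σ Hp Hm (D s)) ≤
      esaus d t (lazyPZ d) D :=
  stmt11_general d t σ Hp Hm hinv hiso hdisj hmap hfix hhalf D
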